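/- Consider a system with behavior B = {y : ℤ≥0 → ℝ^N : there exists ℓ : ℤ≥0 → ℝ^m with y = M(σ)ℓ and D(σ)ℓ = 0}, where M(ξ) is an N × m and D(ξ) an m × m polynomial matrix over ℝ[ξ]. Let J ⊆ {1,…,N} and suppose the stacked matrix [M_J(ξ); D(ξ)] is left unimodular. If ℓ : ℤ≥0 → ℝ^m satisfies D(σ)ℓ = 0 and M_J(σ)ℓ = 0, then ℓ = 0 and hence M(σ)ℓ = 0. Consequently, if for every subset J of cardinality L̃ the matrix [M_J(ξ); D(ξ)] is left unimodular, then every nonzero y ∈ B has weight ‖y‖ ≥ N + 1 − L̃. -/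
import Mathlib


open Polynomial

/-- A signal with components indexed by `β`. -/
abbrev Signal (N : ℕ) := ℕ → Fin N → ℝ

/-- Action of a scalar polynomial on a scalar signal via the shift operator `σ`. -/
noncomputable def polyShift (a : Polynomial ℝ) (y : ℕ → ℝ) : ℕ → ℝ :=
  fun t => a.sum fun k c => c * y (t + k)

/-- Action of a polynomial matrix on a signal via the shift operator `σ`. -/
noncomputable def matShift {α β : Type*} [Fintype β]
    (P : Matrix α β (Polynomial ℝ)) (y : ℕ → β → ℝ) : ℕ → α → ℝ :=
  fun t i => ∑ j, polyShift (P i j) (fun s => y s j) t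

/-- Support of a signal: indices of components not identically zero. -/
def sigSupp {N : ℕ} (y : Signal N) : Set (Fin N) := {i | ¬ ∀ t, y t i = 0}

/-- Weight of a signal. -/
noncomputable def wt {N : ℕ} (y : Signal N) : ℕ := (sigSupp y).ncard

/-- A polynomial matrix is left unimodular if it has a polynomial left inverse. -/
def LeftUnimodular {α β : Type*} [Fintype α] [Fintype β] [DecidableEq β]
    (P : Matrix α β (Polynomial ℝ)) : Prop :=
  ∃ G : Matrix β α (Polynomial ℝ), G * P = 1

/-- Submatrix of the columns of `R` indexed by `J`. -/
def colSub {N : ℕ} (R : Matrix (Fin N) (Fin N) (Polynomial ℝ)) (J : Finset (Fin N)) :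
    Matrix (Fin N) {x // x ∈ J} (Polynomial ℝ) :=
  R.submatrix id (fun j => (j : Fin N))

/-- Submatrix of the rows of `M` indexed by `J`. -/
def rowSub {N m : ℕ} (M : Matrix (Fin N) (Fin m) (Polynomial ℝ)) (J : Finset (Fin N)) :
    Matrix {x // x ∈ J} (Fin m) (Polynomial ℝ) :=
  M.submatrix (fun i => (i : Fin N)) id

/-- Restriction of a signal to the components indexed by `J`. -/
def sigRestrict {N : ℕ} (r : Signal N) (J : Finset (Fin N)) : ℕ → {x // x ∈ J} → ℝ :=
  fun t i => r t (i : Fin N)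

/-- Security index: the minimum weight of a nonzero signal in the behavior. -/
noncomputable def secIdx {N : ℕ} (B : Set (Signal N)) : ℕ :=
  sInf {k | ∃ y ∈ B, y ≠ 0 ∧ wt y = k}

noncomputable def shiftEnd : Module.End ℝ (ℕ → ℝ) where
  toFun y := fun t => y (t + 1)
  map_add' _ _ := rfl
  map_smul' _ _ := rfl

lemma shiftEnd_pow (n : ℕ) : ∀ (y : ℕ → ℝ) (t : ℕ), (shiftEnd ^ n) y t = y (t + n) := by
  induction n with
  | zero => intro y t; simp
  | succ k ih =>
      intro y t
      rw [pow_succ]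
      have h : (shiftEnd ^ k * shiftEnd) y = (shiftEnd ^ k) (shiftEnd y) := rfl
      rw [h, ih (shiftEnd y) t]
      show y (t + k + 1) = y (t + (k + 1))
      ring_nf

lemma polyShift_eq (a : Polynomial ℝ) (y : ℕ → ℝ) :
    polyShift a y = (Polynomial.aeval shiftEnd a) y := by
  induction a using Polynomial.induction_on' with
  | add p q hp hq =>
      funext t
      have h1 : polyShift (p + q) y t = polyShift p y t + polyShift q y t := by
        simp [polyShift]
        rw [Polynomial.sum_add_index] <;> simp [add_mul]
      rw [h1, hp, hq, map_add]
      rfl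
  | monomial n c =>
      funext t
      have h1 : polyShift ((monomial n) c) y t = c * y (t + n) := by
        simp only [polyShift]
        rw [Polynomial.sum_monomial_index]
        simp
      rw [h1, Polynomial.aeval_monomial]
      have : (algebraMap ℝ (Module.End ℝ (ℕ → ℝ)) c * shiftEnd ^ n) y
          = c • ((shiftEnd ^ n) y) := rfl
      rw [this]
      simp [shiftEnd_pow]

lemma matShift_zero {α β : Type*} [Fintype β] (P : Matrix α β (Polynomial ℝ)) :
    matShift P (0 : ℕ → β → ℝ) = 0 := by
  funext t i
  simp [matShift, polyShift, Polynomial.sum]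

lemma matShift_one {β : Type*} [Fintype β] [DecidableEq β] (y : ℕ → β → ℝ) :
    matShift (1 : Matrix β β (Polynomial ℝ)) y = y := by
  funext t i
  simp only [matShift, polyShift_eq, Matrix.one_apply]
  rw [Finset.sum_eq_single i]
  · simp
  · intro b _ hb
    simp [Ne.symm hb]
  · intro h; exact absurd (Finset.mem_univ i) h

lemma matShift_mul {α β γ : Type*} [Fintype β] [Fintype γ]
    (G : Matrix α β (Polynomial ℝ)) (P : Matrix β γ (Polynomial ℝ)) (y : ℕ → γ → ℝ) :
    matShift (G * P) y = matShift G (matShift P y) := by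
  funext t i
  simp only [matShift, polyShift_eq, Matrix.mul_apply]
  have hR : ∀ k : β, (Polynomial.aeval shiftEnd (G i k))
      (fun s => ∑ j, (Polynomial.aeval shiftEnd (P k j)) (fun u => y u j) s) t
      = ∑ j, (Polynomial.aeval shiftEnd (G i k * P k j)) (fun u => y u j) t := by
    intro k
    have : (fun s => ∑ j, (Polynomial.aeval shiftEnd (P k j)) (fun u => y u j) s)
        = ∑ j, (Polynomial.aeval shiftEnd (P k j)) (fun u => y u j) := by
      funext s; simp [Finset.sum_apply]
    rw [this, map_sum]
    simp only [Finset.sum_apply]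
    congr 1
    funext j
    rw [map_mul]
    rfl
  rw [Finset.sum_congr rfl (fun k _ => hR k), Finset.sum_comm]
  congr 1
  funext j
  rw [map_sum]
  simp [Finset.sum_apply]

/-- if the stacked matrix `[M_J; D]` is left unimodular, then a
driving signal annihilated by `D(σ)` and by `M_J(σ)` is zero; consequently, if
every `L̃`-row selection gives a left unimodular stacked matrix, every nonzero
trajectory in `B` has weight at least `N + 1 - L̃`. -/
theorem stacked_leftUnimodular_weight_bound {N m : ℕ}
    (M : Matrix (Fin N) (Fin m) (Polynomial ℝ))
    (D : Matrix (Fin m) (Fin m) (Polynomial ℝ))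
    (B : Set (Signal N))
    (hB : B = {y | ∃ ℓ : Signal m, y = matShift M ℓ ∧ matShift D ℓ = 0}) :
    (∀ J : Finset (Fin N), LeftUnimodular (Matrix.fromRows (rowSub M J) D) →
      ∀ ℓ : Signal m, matShift D ℓ = 0 → matShift (rowSub M J) ℓ = 0 →
        ℓ = 0 ∧ matShift M ℓ = 0) ∧
    (∀ Ltil : ℕ,
      (∀ J : Finset (Fin N), J.card = Ltil →
        LeftUnimodular (Matrix.fromRows (rowSub M J) D)) →
      ∀ y ∈ B, y ≠ 0 → N + 1 - Ltil ≤ wt y) := by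
  classical
  have key : ∀ J : Finset (Fin N), LeftUnimodular (Matrix.fromRows (rowSub M J) D) →
      ∀ ℓ : Signal m, matShift D ℓ = 0 → matShift (rowSub M J) ℓ = 0 →
        ℓ = 0 ∧ matShift M ℓ = 0 := by
    intro J hU ℓ hD hJ
    obtain ⟨G, hG⟩ := hU
    have hz : matShift (Matrix.fromRows (rowSub M J) D) ℓ = 0 := by
      funext t i
      cases i with
      | inl i =>
          have h1 : matShift (Matrix.fromRows (rowSub M J) D) ℓ t (Sum.inl i)
              = matShift (rowSub M J) ℓ t i := rfl
          rw [h1, hJ]; rfl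
      | inr i =>
          have h1 : matShift (Matrix.fromRows (rowSub M J) D) ℓ t (Sum.inr i)
              = matShift D ℓ t i := rfl
          rw [h1, hD]; rfl
    have hℓ : ℓ = 0 := by
      have h1 : matShift (G * Matrix.fromRows (rowSub M J) D) ℓ = ℓ := by
        rw [hG, matShift_one]
      rw [matShift_mul, hz, matShift_zero] at h1
      exact h1.symm
    exact ⟨hℓ, by rw [hℓ, matShift_zero]⟩
  refine ⟨key, ?_⟩
  intro Ltil hU y hy hynz
  rw [hB] at hy
  obtain ⟨ℓ, hyM, hD⟩ := hy
  by_contra hcon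
  push_neg at hcon
  have hsum : (sigSupp y).ncard + (sigSupp y)ᶜ.ncard = N := by
    have h := Set.ncard_add_ncard_compl (sigSupp y)
    simpa using h
  have hL : Ltil ≤ (sigSupp y)ᶜ.toFinset.card := by
    rw [← Set.ncard_eq_toFinset_card']
    have : wt y = (sigSupp y).ncard := rfl
    omega
  obtain ⟨J, hJsub, hJcard⟩ := Finset.exists_subset_card_eq hL
  have hMJ : matShift (rowSub M J) ℓ = 0 := by
    funext t i
    have hi : (i : Fin N) ∈ (sigSupp y)ᶜ := by
      have := hJsub i.2
      simpa using this
    have hzero : ∀ s, y s (i : Fin N) = 0 := by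
      simpa [sigSupp] using hi
    have h1 : matShift (rowSub M J) ℓ t i = matShift M ℓ t (i : Fin N) := rfl
    rw [h1, ← hyM, hzero t]; rfl
  obtain ⟨hℓ0, -⟩ := key J (hU J hJcard) ℓ hD hMJ
  apply hynz
  rw [hyM, hℓ0, matShift_zero]
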